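/- arXiv:1711.07666 — 5 statements merged into one kernel-verified Lean document; each statement's English description precedes it below -/
import Mathlib

section
/- Let Φ(λ,r) be defined by Φ(λ,0)=1, Φ(λ,1)=λ/(q+1), and Φ(λ,r+1) = (1/q)(λΦ(λ,r) − Φ(λ,r−1)) for r ≥ 1. Then for all r ≥ 0 and all λ, Φ(λ,r) = q^{−r/2} ( (2/(q+1)) P_r(λ/(2√q)) + ((q−1)/(q+1)) Q_r(λ/(2√q)) ), where P_r and Q_r are the Chebyshev polynomials of the first and second kind. -/
/-!
Both sides satisfy the same second-order linear recurrence `u (r + 2) = (x u (r + 1) - u r) / q`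
and agree for `r = 0, 1`. For the right-hand side this is because a solution `c` of the Chebyshev
recurrence `c (r + 2) = 2 y c (r + 1) - c r` rescales to a solution `c r / s ^ r` of the recurrence
with `q = s ^ 2` and `x = 2 y s`.
-/

open Polynomial Polynomial.Chebyshev

namespace LinearRecurrence

variable {K : Type*} [Field K]

def spherical (q x : K) : LinearRecurrence K := ⟨2, ![-q⁻¹, x / q]⟩

theorem isSolution_spherical_iff {q x : K} {u : ℕ → K} :
    (spherical q x).IsSolution u ↔ ∀ n, u (n + 2) = (x * u (n + 1) - u n) / q := by
  refine forall_congr' fun n => ?_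
  change u (n + 2) = ∑ i : Fin 2, ![-q⁻¹, x / q] i * u (n + i) ↔ _
  rw [Fin.sum_univ_two]
  simp only [Matrix.cons_val_zero, Matrix.cons_val_one, Fin.val_zero, Fin.val_one, add_zero]
  ring_nf

theorem isSolution_spherical_div_pow {s y : K} (hs : s ≠ 0) {c : ℕ → K}
    (hc : ∀ n, c (n + 2) = 2 * y * c (n + 1) - c n) :
    (spherical (s ^ 2) (2 * y * s)).IsSolution fun n => c n / s ^ n := by
  refine isSolution_spherical_iff.2 fun n => ?_
  rw [hc n]
  field_simp
  ring

end LinearRecurrence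

/-- The spherical function recursion on the (q+1)-regular tree equals the explicit
Chebyshev-polynomial formula. -/
theorem spherical_function_chebyshev (q : ℕ) (hq : 2 ≤ q) (Φ : ℝ → ℕ → ℝ)
    (h0 : ∀ x : ℝ, Φ x 0 = 1)
    (h1 : ∀ x : ℝ, Φ x 1 = x / ((q : ℝ) + 1))
    (hrec : ∀ (x : ℝ) (r : ℕ), 1 ≤ r →
      Φ x (r + 1) = (1 / (q : ℝ)) * (x * Φ x r - Φ x (r - 1))) :
    ∀ (x : ℝ) (r : ℕ),
      Φ x r = ((2 / ((q : ℝ) + 1)) * (Polynomial.Chebyshev.T ℝ r).eval (x / (2 * Real.sqrt q))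
          + (((q : ℝ) - 1) / ((q : ℝ) + 1)) * (Polynomial.Chebyshev.U ℝ r).eval (x / (2 * Real.sqrt q)))
        / (Real.sqrt q) ^ r := by
  intro x
  set s := Real.sqrt q
  set y := x / (2 * s)
  have hs : s ≠ 0 := Real.sqrt_ne_zero'.2 (by exact_mod_cast (by omega : 0 < q))
  have hsq : s ^ 2 = q := Real.sq_sqrt (Nat.cast_nonneg q)
  have hx : 2 * y * s = x := by simp only [y]; field_simp
  have hΦ : (LinearRecurrence.spherical (q : ℝ) x).IsSolution (Φ x) :=
    LinearRecurrence.isSolution_spherical_iff.2 fun n => by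
      simpa [div_eq_inv_mul] using hrec x (n + 1) (by omega)
  have hcheb := LinearRecurrence.isSolution_spherical_div_pow (y := y) hs
    (c := fun r => 2 / ((q : ℝ) + 1) * (T ℝ r).eval y + ((q : ℝ) - 1) / (q + 1) * (U ℝ r).eval y)
    fun n => by
      push_cast
      simp only [T_add_two, U_add_two, eval_sub, eval_mul, eval_ofNat, eval_X]
      ring
  rw [hsq, hx] at hcheb
  intro r
  refine congrFun ((LinearRecurrence.eq_iff_eqOn_range_order _ _ _ hΦ hcheb).2 ?_) r
  intro n hn
  have hq1 : (q : ℝ) + 1 ≠ 0 := by positivity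
  obtain rfl | rfl : n = 0 ∨ n = 1 := by
    simp only [LinearRecurrence.spherical, Finset.coe_range, Set.mem_Iio] at hn; omega
  · simp only [h0, CharP.cast_eq_zero, T_zero, eval_one, mul_one, U_zero, pow_zero, div_one]
    field_simp
    ring
  · simp only [h1, Nat.cast_one, T_one, eval_X, U_one, eval_mul, eval_ofNat, pow_one, y]
    field_simp
    rw [hsq]
    ring
end

section
/- Let G be a (q+1)-regular graph, ψ an eigenfunction of the adjacency matrix A_G with eigenvalue λ, and let ε be a root of the quadratic equation qε² − λε + 1 = 0. Then f = τ_+ψ − ε τ_−ψ is an eigenfunction of the non-backtracking operator B with eigenvalue ε^{−1}, i.e. Bf = ε^{−1} f. -/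
open Finset

variable {V : Type*}

/-- The non-backtracking operator on functions of directed edges. -/
noncomputable def nbOp [DecidableEq V] (G : SimpleGraph V) [∀ v : V, Fintype (G.neighborSet v)]
    (f : V × V → ℂ) : V × V → ℂ :=
  fun e => ∑ y ∈ G.neighborFinset e.2 \ {e.1}, f (e.2, y)

/-- If A_G ψ = λψ on a (q+1)-regular graph and qε² − λε + 1 = 0, then
f = τ₊ψ − ε τ₋ψ satisfies Bf = ε⁻¹ f. -/
theorem nonbacktracking_eigenfunction [DecidableEq V] (G : SimpleGraph V)
    [∀ v : V, Fintype (G.neighborSet v)]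
    (q : ℕ) (hreg : ∀ v : V, G.degree v = q + 1)
    (ψ : V → ℂ) (lam ε : ℂ)
    (heig : ∀ x : V, ∑ y ∈ G.neighborFinset x, ψ y = lam * ψ x)
    (hroot : (q : ℂ) * ε ^ 2 - lam * ε + 1 = 0) (hε : ε ≠ 0) :
    ∀ e : V × V, G.Adj e.1 e.2 →
      nbOp G (fun e' => ψ e'.2 - ε * ψ e'.1) e = ε⁻¹ * (ψ e.2 - ε * ψ e.1) := by
  rintro ⟨x0, x1⟩ hadj
  have hx0 : {x0} ⊆ G.neighborFinset x1 := by
    simp [SimpleGraph.mem_neighborFinset]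
    exact hadj.symm
  have hcard : (G.neighborFinset x1 \ {x0}).card = q := by
    rw [Finset.card_sdiff_of_subset hx0, Finset.card_singleton]
    have := hreg x1
    rw [← SimpleGraph.card_neighborFinset_eq_degree] at this
    omega
  have hsum : nbOp G (fun e' => ψ e'.2 - ε * ψ e'.1) (x0, x1)
      = (lam * ψ x1 - ψ x0) - ε * q * ψ x1 := by
    simp only [nbOp, Finset.sum_sub_distrib, Finset.sum_const, hcard]
    rw [Finset.sum_sdiff_eq_sub hx0, Finset.sum_singleton, heig x1]
    ring
  rw [hsum]
  field_simp
  linear_combination (-(ψ x1)) * hroot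
end

section
/- Let G be a finite (q+1)-regular graph, ψ, φ ∈ ℓ²(V), and K a function on non-backtracking paths of length k ≥ 1, defining the operator K_G by ⟨φ, K_G ψ⟩ = Σ_{(x_0;x_k)∈B_k} conj(φ(x_0)) K(x_0;x_k) ψ(x_k). Then ⟨A_G φ, K_G ψ⟩ − ⟨φ, K_G A_G ψ⟩ = ⟨φ, (∇K)_G ψ⟩ + ⟨φ, (∇*K)_G ψ⟩, where ∇ maps functions on B_k to functions on B_{k+1} by (∇K)(x_0;x_{k+1}) = K(x_1;x_{k+1}) − K(x_0;x_k), and ∇* maps functions on B_k to functions on B_{k−1} (the adjoint of ∇). -/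
open Finset

variable {V : Type*}

/-- A non-backtracking walk of length `n`: consecutive vertices are adjacent and
`p (i+2) ≠ p i`. -/
def IsNBWalk (G : SimpleGraph V) {n : ℕ} (p : Fin (n + 1) → V) : Prop :=
  (∀ i j : Fin (n + 1), (j : ℕ) = (i : ℕ) + 1 → G.Adj (p i) (p j)) ∧
  (∀ i j : Fin (n + 1), (j : ℕ) = (i : ℕ) + 2 → p j ≠ p i)

instance (G : SimpleGraph V) [DecidableEq V] [DecidableRel G.Adj] (n : ℕ) :
    DecidablePred (IsNBWalk G (n := n)) := fun _ => by
  unfold IsNBWalk; infer_instance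

/-- (∇K)(x₀;x_{n+1}) = K(x₁;x_{n+1}) − K(x₀;x_n). -/
noncomputable def gradK {n : ℕ} (K : (Fin (n + 1) → V) → ℂ) : (Fin (n + 2) → V) → ℂ :=
  fun p => K (fun i => p i.succ) - K (fun i => p i.castSucc)

/-- The adjoint ∇*: (∇*K)(x₀;x_n) = Σ_{x₋₁ ∈ N(x₀)\{x₁}} K(x₋₁;x_n)
− Σ_{x_{n+1} ∈ N(x_n)\{x_{n−1}}} K(x₀;x_{n+1}). -/
noncomputable def gradStarK [DecidableEq V] (G : SimpleGraph V)
    [∀ v : V, Fintype (G.neighborSet v)]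
    {n : ℕ} (K : (Fin (n + 2) → V) → ℂ) : (Fin (n + 1) → V) → ℂ :=
  fun p =>
    (∑ y ∈ G.neighborFinset (p 0) \ {p 1}, K (Fin.cons y p))
    - ∑ y ∈ G.neighborFinset (p (Fin.last n)) \ {p ⟨n - 1, Nat.sub_lt_succ n 1⟩},
        K (Fin.snoc p y)


/-- The action of the adjacency matrix. -/
noncomputable def adjAct [Fintype V] [DecidableEq V] (G : SimpleGraph V)
    [DecidableRel G.Adj] (ψ : V → ℂ) : V → ℂ :=
  fun x => ∑ y ∈ G.neighborFinset x, ψ y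

/-- ⟨φ, L_G ψ⟩ for a kernel L on non-backtracking paths of length j. -/
noncomputable def eForm [Fintype V] [DecidableEq V] (G : SimpleGraph V)
    [DecidableRel G.Adj] (j : ℕ) (φ : V → ℂ) (L : (Fin (j + 1) → V) → ℂ) (ψ : V → ℂ) : ℂ :=
  ∑ p ∈ univ.filter (fun p : Fin (j + 1) → V => IsNBWalk G p),
    (starRingEnd ℂ) (φ (p 0)) * L p * ψ (p (Fin.last j))

lemma cons_mk_zero {n : ℕ} (y : V) (r : Fin (n+1) → V) (h : 0 < n+2) :
    (Fin.cons y r : Fin (n+2) → V) ⟨0, h⟩ = y := by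
  have h0 : (⟨0, h⟩ : Fin (n+2)) = 0 := rfl
  rw [h0, Fin.cons_zero]

lemma cons_mk_succ {n : ℕ} (y : V) (r : Fin (n+1) → V) (i : ℕ) (hi : i+1 < n+2) :
    (Fin.cons y r : Fin (n+2) → V) ⟨i+1, hi⟩ = r ⟨i, Nat.lt_of_succ_lt_succ hi⟩ :=
  Fin.cons_succ (α := fun _ => V) y r ⟨i, Nat.lt_of_succ_lt_succ hi⟩

lemma cons_mk_succ2 {n : ℕ} (y : V) (r : Fin (n+1) → V) (i : ℕ) (hi : i+2 < n+2) :
    (Fin.cons y r : Fin (n+2) → V) ⟨i+2, hi⟩ = r ⟨i+1, by omega⟩ :=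
  Fin.cons_succ (α := fun _ => V) y r ⟨i+1, by omega⟩

lemma snoc_mk_lt {n : ℕ} (y : V) (r : Fin (n+1) → V) (i : ℕ) (hi : i < n+1) (hi2 : i < n+2) :
    (Fin.snoc r y : Fin (n+2) → V) ⟨i, hi2⟩ = r ⟨i, hi⟩ :=
  Fin.snoc_castSucc (α := fun _ => V) y r ⟨i, hi⟩

lemma snoc_mk_last {n : ℕ} (y : V) (r : Fin (n+1) → V) (h : n+1 < n+2) :
    (Fin.snoc r y : Fin (n+2) → V) ⟨n+1, h⟩ = y := by
  have h0 : (⟨n+1, h⟩ : Fin (n+2)) = Fin.last (n+1) := rfl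
  rw [h0]; exact Fin.snoc_last (α := fun _ => V) y r

lemma isNBWalk_cons (G : SimpleGraph V) {n : ℕ} (y : V) (r : Fin (n + 1) → V) :
    IsNBWalk G (Fin.cons y r : Fin (n + 2) → V) ↔
      IsNBWalk G r ∧ G.Adj (r 0) y ∧ y ≠ r 1 := by
  constructor
  · rintro ⟨h1, h2⟩
    refine ⟨⟨fun i j hij => ?_, fun i j hij => ?_⟩, ?_, ?_⟩
    · have := h1 i.succ j.succ (by simp [hij])
      simpa using this
    · have := h2 i.succ j.succ (by simp [hij])
      simpa using this
    · have := h1 ⟨0, by omega⟩ ⟨0+1, by omega⟩ rfl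
      rw [cons_mk_zero, cons_mk_succ] at this
      exact this.symm
    · rcases n with _ | m
      · have := h1 ⟨0, by omega⟩ ⟨0+1, by omega⟩ rfl
        rw [cons_mk_zero, cons_mk_succ] at this
        exact this.ne
      · have := h2 ⟨0, by omega⟩ ⟨0+2, by omega⟩ rfl
        rw [cons_mk_zero, cons_mk_succ2] at this
        have e : (1 : Fin (m + 2)) = ⟨0+1, by omega⟩ := by
          ext; rw [Fin.val_one]
        rw [e]
        exact this.symm
  · rintro ⟨⟨h1, h2⟩, hadj, hne⟩
    constructor
    · rintro ⟨iv, hi⟩ ⟨jv, hj⟩ hij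
      simp only at hij
      subst hij
      cases iv with
      | zero =>
        rw [cons_mk_zero, cons_mk_succ]
        exact hadj.symm
      | succ m =>
        rw [cons_mk_succ, cons_mk_succ]
        exact h1 _ _ rfl
    · rintro ⟨iv, hi⟩ ⟨jv, hj⟩ hij
      simp only at hij
      subst hij
      cases iv with
      | zero =>
        rw [cons_mk_zero, cons_mk_succ2]
        have e : (1 : Fin (n + 1)) = ⟨0+1, by omega⟩ := by
          ext; rw [Fin.val_one']; exact Nat.mod_eq_of_lt (by omega)
        rw [e] at hne
        exact fun hh => hne hh.symm
      | succ m =>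
        rw [cons_mk_succ2 y r (m+1) hj, cons_mk_succ y r m hi]
        exact h2 ⟨m, by omega⟩ ⟨m+2, by omega⟩ rfl

lemma isNBWalk_snoc (G : SimpleGraph V) {n : ℕ} (y : V) (r : Fin (n + 1) → V) :
    IsNBWalk G (Fin.snoc r y : Fin (n + 2) → V) ↔
      IsNBWalk G r ∧ G.Adj (r (Fin.last n)) y ∧ y ≠ r ⟨n - 1, Nat.sub_lt_succ n 1⟩ := by
  constructor
  · rintro ⟨h1, h2⟩
    refine ⟨⟨fun i j hij => ?_, fun i j hij => ?_⟩, ?_, ?_⟩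
    · have := h1 i.castSucc j.castSucc (by simpa using hij)
      simpa [Fin.snoc_castSucc] using this
    · have := h2 i.castSucc j.castSucc (by simpa using hij)
      simpa [Fin.snoc_castSucc] using this
    · have := h1 ⟨n, by omega⟩ ⟨n+1, by omega⟩ rfl
      rw [snoc_mk_lt y r n (by omega), snoc_mk_last] at this
      exact this
    · rcases n with _ | m
      · have := h1 ⟨0, by omega⟩ ⟨0+1, by omega⟩ rfl
        rw [snoc_mk_lt y r 0 (by omega)] at this
        have := this.ne'
        exact this
      · have := h2 ⟨m, by omega⟩ ⟨m+1+1, by omega⟩ (by show m+1+1 = m+2; omega)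
        rw [snoc_mk_lt y r m (by omega), snoc_mk_last] at this
        exact this
  · rintro ⟨⟨h1, h2⟩, hadj, hne⟩
    constructor
    · rintro ⟨iv, hi⟩ ⟨jv, hj⟩ hij
      simp only at hij
      subst hij
      rcases Nat.lt_or_ge (iv+1) (n+1) with hlt | hge
      · rw [snoc_mk_lt y r iv (by omega), snoc_mk_lt y r (iv+1) (by omega)]
        exact h1 _ _ rfl
      · have hiv : iv = n := by omega
        subst hiv
        rw [snoc_mk_lt y r iv (by omega), snoc_mk_last]
        exact hadj
    · rintro ⟨iv, hi⟩ ⟨jv, hj⟩ hij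
      simp only at hij
      subst hij
      rcases Nat.lt_or_ge (iv+2) (n+1) with hlt | hge
      · rw [snoc_mk_lt y r iv (by omega), snoc_mk_lt y r (iv+2) (by omega)]
        exact h2 _ _ rfl
      · have hn : n = iv + 1 := by omega
        subst hn
        have e : (⟨iv+2, hj⟩ : Fin (iv+1+2)) = ⟨iv+1+1, by omega⟩ := rfl
        rw [e, snoc_mk_last, snoc_mk_lt y r iv (by omega)]
        exact hne

lemma sum_nb_cons [Fintype V] [DecidableEq V] (G : SimpleGraph V) [DecidableRel G.Adj]
    (n : ℕ) (f : (Fin (n + 2) → V) → ℂ) :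
    ∑ p ∈ univ.filter (fun p : Fin (n + 2) → V => IsNBWalk G p), f p
      = ∑ r ∈ univ.filter (fun r : Fin (n + 1) → V => IsNBWalk G r),
          ∑ y ∈ G.neighborFinset (r 0) \ {r 1}, f (Fin.cons y r) := by
  classical
  rw [Finset.sum_sigma']
  refine Finset.sum_nbij' (i := fun p => ⟨Fin.tail p, p 0⟩)
    (j := fun x => Fin.cons x.2 x.1) ?_ ?_ ?_ ?_ ?_
  · intro p hp
    simp only [mem_filter, mem_univ, true_and] at hp
    have hp' := (isNBWalk_cons G (p 0) (Fin.tail p)).mp (by rwa [Fin.cons_self_tail])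
    refine Finset.mem_sigma.mpr ⟨?_, ?_⟩
    · simpa only [mem_filter, mem_univ, true_and] using hp'.1
    · rw [Finset.mem_sdiff, SimpleGraph.mem_neighborFinset, Finset.mem_singleton]
      exact ⟨hp'.2.1, hp'.2.2⟩
  · rintro ⟨r, y⟩ hx
    rw [Finset.mem_sigma] at hx
    obtain ⟨hr, hy⟩ := hx
    simp only [mem_filter, mem_univ, true_and] at hr ⊢
    rw [Finset.mem_sdiff, SimpleGraph.mem_neighborFinset, Finset.mem_singleton] at hy
    exact (isNBWalk_cons G y r).mpr ⟨hr, hy.1, hy.2⟩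
  · intro p _
    exact Fin.cons_self_tail p
  · rintro ⟨r, y⟩ _
    simp [Fin.tail_cons]
  · intro p _
    simp only
    rw [Fin.cons_self_tail]

lemma sum_nb_snoc [Fintype V] [DecidableEq V] (G : SimpleGraph V) [DecidableRel G.Adj]
    (n : ℕ) (f : (Fin (n + 2) → V) → ℂ) :
    ∑ p ∈ univ.filter (fun p : Fin (n + 2) → V => IsNBWalk G p), f p
      = ∑ r ∈ univ.filter (fun r : Fin (n + 1) → V => IsNBWalk G r),
          ∑ y ∈ G.neighborFinset (r (Fin.last n)) \ {r ⟨n - 1, Nat.sub_lt_succ n 1⟩},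
            f (Fin.snoc r y) := by
  classical
  rw [Finset.sum_sigma']
  refine Finset.sum_nbij' (i := fun p => ⟨Fin.init p, p (Fin.last (n + 1))⟩)
    (j := fun x => Fin.snoc x.1 x.2) ?_ ?_ ?_ ?_ ?_
  · intro p hp
    simp only [mem_filter, mem_univ, true_and] at hp
    have hp' := (isNBWalk_snoc G (p (Fin.last (n + 1))) (Fin.init p)).mp
      (by rwa [Fin.snoc_init_self])
    refine Finset.mem_sigma.mpr ⟨?_, ?_⟩
    · simpa only [mem_filter, mem_univ, true_and] using hp'.1
    · rw [Finset.mem_sdiff, SimpleGraph.mem_neighborFinset, Finset.mem_singleton]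
      exact ⟨hp'.2.1, hp'.2.2⟩
  · rintro ⟨r, y⟩ hx
    rw [Finset.mem_sigma] at hx
    obtain ⟨hr, hy⟩ := hx
    simp only [mem_filter, mem_univ, true_and] at hr ⊢
    rw [Finset.mem_sdiff, SimpleGraph.mem_neighborFinset, Finset.mem_singleton] at hy
    exact (isNBWalk_snoc G y r).mpr ⟨hr, hy.1, hy.2⟩
  · intro p _
    exact Fin.snoc_init_self p
  · rintro ⟨r, y⟩ _
    simp [Fin.init_snoc, Fin.snoc_last]
  · intro p _
    simp only
    rw [Fin.snoc_init_self]

lemma snoc_zero {n : ℕ} (y : V) (r : Fin (n+1) → V) :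
    (Fin.snoc r y : Fin (n+2) → V) 0 = r 0 := snoc_mk_lt y r 0 (by omega) (by omega)

/-- ⟨A_Gφ, K_Gψ⟩ − ⟨φ, K_G A_Gψ⟩ = ⟨φ, (∇K)_G ψ⟩ + ⟨φ, (∇*K)_G ψ⟩. -/
theorem commutator_identity [Fintype V] [DecidableEq V] (G : SimpleGraph V)
    [DecidableRel G.Adj]
    (q k : ℕ) (hreg : G.IsRegularOfDegree (q + 1))
    (K : (Fin (k + 2) → V) → ℂ) (φ ψ : V → ℂ) :
    eForm G (k + 1) (adjAct G φ) K ψ - eForm G (k + 1) φ K (adjAct G ψ)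
      = eForm G (k + 2) φ (gradK K) ψ + eForm G k φ (gradStarK G K) ψ := by
  classical
  -- canonical sums
  have hA : (∑ p ∈ univ.filter (fun p : Fin (k + 3) → V => IsNBWalk G p),
        (starRingEnd ℂ) (φ (p 0)) * K (Fin.tail p) * ψ (p (Fin.last (k + 2))))
      = ∑ p ∈ univ.filter (fun p : Fin (k + 2) → V => IsNBWalk G p),
          ∑ y ∈ G.neighborFinset (p 0) \ {p 1},
            (starRingEnd ℂ) (φ y) * K p * ψ (p (Fin.last (k + 1))) := by
    rw [sum_nb_cons G (k + 1)
      (fun p => (starRingEnd ℂ) (φ (p 0)) * K (Fin.tail p) * ψ (p (Fin.last (k + 2))))]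
    refine Finset.sum_congr rfl fun r _ => Finset.sum_congr rfl fun y _ => ?_
    have e : Fin.last (k + 2) = (Fin.last (k + 1)).succ := rfl
    rw [Fin.cons_zero, Fin.tail_cons, e, Fin.cons_succ]
  have hB : (∑ p ∈ univ.filter (fun p : Fin (k + 2) → V => IsNBWalk G p),
        (starRingEnd ℂ) (φ (p 1)) * K p * ψ (p (Fin.last (k + 1))))
      = ∑ r ∈ univ.filter (fun r : Fin (k + 1) → V => IsNBWalk G r),
          (starRingEnd ℂ) (φ (r 0)) *
            (∑ y ∈ G.neighborFinset (r 0) \ {r 1}, K (Fin.cons y r)) * ψ (r (Fin.last k)) := by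
    rw [sum_nb_cons G k
      (fun p => (starRingEnd ℂ) (φ (p 1)) * K p * ψ (p (Fin.last (k + 1))))]
    refine Finset.sum_congr rfl fun r _ => ?_
    have step : ∀ y ∈ G.neighborFinset (r 0) \ {r 1},
        (starRingEnd ℂ) (φ ((Fin.cons y r : Fin (k+2) → V) 1)) * K (Fin.cons y r) *
          ψ ((Fin.cons y r : Fin (k+2) → V) (Fin.last (k + 1)))
        = (starRingEnd ℂ) (φ (r 0)) * K (Fin.cons y r) * ψ (r (Fin.last k)) := by
      intro y _
      have e1 : (1 : Fin (k + 2)) = (0 : Fin (k + 1)).succ := by ext; simp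
      have e2 : Fin.last (k + 1) = (Fin.last k).succ := rfl
      rw [e1, e2, Fin.cons_succ, Fin.cons_succ]
    rw [Finset.sum_congr rfl step, ← Finset.sum_mul, ← Finset.mul_sum]
  have hC : (∑ p ∈ univ.filter (fun p : Fin (k + 3) → V => IsNBWalk G p),
        (starRingEnd ℂ) (φ (p 0)) * K (Fin.init p) * ψ (p (Fin.last (k + 2))))
      = ∑ p ∈ univ.filter (fun p : Fin (k + 2) → V => IsNBWalk G p),
          ∑ y ∈ G.neighborFinset (p (Fin.last (k + 1))) \
              {p ⟨k + 1 - 1, Nat.sub_lt_succ (k + 1) 1⟩},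
            (starRingEnd ℂ) (φ (p 0)) * K p * ψ y := by
    rw [sum_nb_snoc G (k + 1)
      (fun p => (starRingEnd ℂ) (φ (p 0)) * K (Fin.init p) * ψ (p (Fin.last (k + 2))))]
    refine Finset.sum_congr rfl fun r _ => Finset.sum_congr rfl fun y _ => ?_
    rw [Fin.init_snoc, Fin.snoc_last, snoc_zero]
  have hD : (∑ p ∈ univ.filter (fun p : Fin (k + 2) → V => IsNBWalk G p),
        (starRingEnd ℂ) (φ (p 0)) * K p * ψ (p ⟨k + 1 - 1, Nat.sub_lt_succ (k + 1) 1⟩))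
      = ∑ r ∈ univ.filter (fun r : Fin (k + 1) → V => IsNBWalk G r),
          (starRingEnd ℂ) (φ (r 0)) *
            (∑ y ∈ G.neighborFinset (r (Fin.last k)) \ {r ⟨k - 1, Nat.sub_lt_succ k 1⟩},
              K (Fin.snoc r y)) * ψ (r (Fin.last k)) := by
    rw [sum_nb_snoc G k
      (fun p => (starRingEnd ℂ) (φ (p 0)) * K p * ψ (p ⟨k + 1 - 1, Nat.sub_lt_succ (k + 1) 1⟩))]
    refine Finset.sum_congr rfl fun r _ => ?_
    have step : ∀ y ∈ G.neighborFinset (r (Fin.last k)) \ {r ⟨k - 1, Nat.sub_lt_succ k 1⟩},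
        (starRingEnd ℂ) (φ ((Fin.snoc r y : Fin (k+2) → V) 0)) * K (Fin.snoc r y) *
          ψ ((Fin.snoc r y : Fin (k+2) → V) ⟨k + 1 - 1, Nat.sub_lt_succ (k + 1) 1⟩)
        = (starRingEnd ℂ) (φ (r 0)) * K (Fin.snoc r y) * ψ (r (Fin.last k)) := by
      intro y _
      have e : (⟨k + 1 - 1, Nat.sub_lt_succ (k + 1) 1⟩ : Fin (k + 2)) = ⟨k, by omega⟩ := rfl
      rw [snoc_zero, e, snoc_mk_lt y r k (by omega)]
      rfl
    rw [Finset.sum_congr rfl step, ← Finset.sum_mul, ← Finset.mul_sum]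
  -- expand LHS terms
  have h1 : eForm G (k + 1) (adjAct G φ) K ψ
      = (∑ p ∈ univ.filter (fun p : Fin (k + 2) → V => IsNBWalk G p),
          ∑ y ∈ G.neighborFinset (p 0) \ {p 1},
            (starRingEnd ℂ) (φ y) * K p * ψ (p (Fin.last (k + 1))))
        + ∑ p ∈ univ.filter (fun p : Fin (k + 2) → V => IsNBWalk G p),
            (starRingEnd ℂ) (φ (p 1)) * K p * ψ (p (Fin.last (k + 1))) := by
    unfold eForm adjAct
    rw [← Finset.sum_add_distrib]
    refine Finset.sum_congr rfl fun p hp => ?_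
    simp only [mem_filter, mem_univ, true_and] at hp
    have hmem : p 1 ∈ G.neighborFinset (p 0) := by
      rw [SimpleGraph.mem_neighborFinset]
      have e0 : (0 : Fin (k + 2)) = ⟨0, by omega⟩ := rfl
      have e1 : (1 : Fin (k + 2)) = ⟨0 + 1, by omega⟩ := by ext; simp
      rw [e0, e1]
      exact hp.1 ⟨0, by omega⟩ ⟨0 + 1, by omega⟩ rfl
    rw [map_sum, Finset.sum_mul, Finset.sum_mul,
      Finset.sum_eq_sum_sdiff_singleton_add hmem]
  have h2 : eForm G (k + 1) φ K (adjAct G ψ)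
      = (∑ p ∈ univ.filter (fun p : Fin (k + 2) → V => IsNBWalk G p),
          ∑ y ∈ G.neighborFinset (p (Fin.last (k + 1))) \
              {p ⟨k + 1 - 1, Nat.sub_lt_succ (k + 1) 1⟩},
            (starRingEnd ℂ) (φ (p 0)) * K p * ψ y)
        + ∑ p ∈ univ.filter (fun p : Fin (k + 2) → V => IsNBWalk G p),
            (starRingEnd ℂ) (φ (p 0)) * K p * ψ (p ⟨k + 1 - 1, Nat.sub_lt_succ (k + 1) 1⟩) := by
    unfold eForm adjAct
    rw [← Finset.sum_add_distrib]
    refine Finset.sum_congr rfl fun p hp => ?_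
    simp only [mem_filter, mem_univ, true_and] at hp
    have hmem : p ⟨k + 1 - 1, Nat.sub_lt_succ (k + 1) 1⟩
        ∈ G.neighborFinset (p (Fin.last (k + 1))) := by
      rw [SimpleGraph.mem_neighborFinset]
      have e0 : Fin.last (k + 1) = (⟨k + 1, by omega⟩ : Fin (k + 2)) := rfl
      have e1 : (⟨k + 1 - 1, Nat.sub_lt_succ (k + 1) 1⟩ : Fin (k + 2)) = ⟨k, by omega⟩ := rfl
      rw [e0, e1]
      exact (hp.1 ⟨k, by omega⟩ ⟨k + 1, by omega⟩ rfl).symm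
    rw [Finset.mul_sum, Finset.sum_eq_sum_sdiff_singleton_add hmem]
  -- expand RHS terms
  have h3 : eForm G (k + 2) φ (gradK K) ψ
      = (∑ p ∈ univ.filter (fun p : Fin (k + 3) → V => IsNBWalk G p),
          (starRingEnd ℂ) (φ (p 0)) * K (Fin.tail p) * ψ (p (Fin.last (k + 2))))
        - ∑ p ∈ univ.filter (fun p : Fin (k + 3) → V => IsNBWalk G p),
            (starRingEnd ℂ) (φ (p 0)) * K (Fin.init p) * ψ (p (Fin.last (k + 2))) := by
    unfold eForm gradK
    rw [← Finset.sum_sub_distrib]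
    refine Finset.sum_congr rfl fun p _ => ?_
    rw [mul_sub, sub_mul]
    rfl
  have h4 : eForm G k φ (gradStarK G K) ψ
      = (∑ r ∈ univ.filter (fun r : Fin (k + 1) → V => IsNBWalk G r),
          (starRingEnd ℂ) (φ (r 0)) *
            (∑ y ∈ G.neighborFinset (r 0) \ {r 1}, K (Fin.cons y r)) * ψ (r (Fin.last k)))
        - ∑ r ∈ univ.filter (fun r : Fin (k + 1) → V => IsNBWalk G r),
            (starRingEnd ℂ) (φ (r 0)) *
              (∑ y ∈ G.neighborFinset (r (Fin.last k)) \ {r ⟨k - 1, Nat.sub_lt_succ k 1⟩},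
                K (Fin.snoc r y)) * ψ (r (Fin.last k)) := by
    unfold eForm gradStarK
    rw [← Finset.sum_sub_distrib]
    refine Finset.sum_congr rfl fun r _ => ?_
    rw [mul_sub, sub_mul]
  rw [h1, h2, h3, h4, hA, hB, hC, hD]
  ring
end

section
/- Let G be a finite (q+1)-regular graph with q ≥ 2. The kernel of ∇ : ℂ^{B_{k−1}} → ℂ^{B_k}, defined by (∇K)(x_0;x_k) = K(x_1;x_k) − K(x_0;x_{k−1}), consists exactly of the constant functions on B_{k−1}, provided G is connected. Consequently, the range of ∇* : ℂ^{B_k} → ℂ^{B_{k−1}} equals the set of functions K on B_{k−1} with Σ_{(x_0;x_{k−1})∈B_{k−1}} K(x_0;x_{k−1}) = 0. -/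
open Finset

variable {V : Type*}

/-!
`∇K = 0` says that `K` takes the same value on the two windows `x₀ … x_k` and `x₁ … x_{k+1}` of
every non-backtracking walk of length `k + 1`. If two walks agree from position `d + 1` on, extend
both by a common neighbour `y` of their last vertex avoiding both penultimate vertices (possible
because every degree is at least 3) and slide both windows one step: they now agree from position
`d` on. Hence `K r` depends only on the last vertex of `r`; sliding once more across an edge shows
that this vertex function is constant on neighbours, so on a connected graph `K` is constant.

Summing over the first, respectively last, step of a walk shows that `∇*` is the adjoint of `∇` for
the counting inner products, so the range of `∇*` is the orthogonal complement of `ker ∇`, i.e. of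
the constants.
-/

section Walks
variable {G : SimpleGraph V} {k : ℕ}

-- For `k = 0`, `r 1` and `r ⟨k - 1, _⟩` both mean `r 0`, and `y ≠ r 0` follows from adjacency.
theorem isNBWalk_cons_iff {r : Fin (k + 1) → V} {y : V} :
    IsNBWalk G (Fin.cons y r : Fin (k + 2) → V) ↔ G.Adj y (r 0) ∧ y ≠ r 1 ∧ IsNBWalk G r := by
  constructor
  · rintro ⟨hadj, hnb⟩
    have hy : G.Adj y (r 0) := by simpa using hadj 0 1 (by simp)
    refine ⟨hy, ?_, fun i j hij => ?_, fun i j hij => ?_⟩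
    · rcases k with _ | k
      · exact hy.ne
      · have := hnb 0 (Fin.succ 1) (by simp)
        rwa [Fin.cons_succ, Fin.cons_zero, ne_comm] at this
    · simpa using hadj i.succ j.succ (by simp [hij])
    · simpa using hnb i.succ j.succ (by simp [hij])
  · rintro ⟨hy, hy1, hadj, hnb⟩
    refine ⟨fun i j hij => ?_, fun i j hij => ?_⟩ <;>
      cases j using Fin.cases <;> cases i using Fin.cases <;> simp at hij
    · subst hij
      simpa using hy
    · simpa using hadj _ _ hij
    · rename_i j
      obtain rfl : j = 1 := Fin.ext (by rw [hij, Fin.val_one', Nat.mod_eq_of_lt (by omega)])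
      simpa using hy1.symm
    · simpa using hnb _ _ hij

theorem IsNBWalk.comp_rev {p : Fin (k + 1) → V} (h : IsNBWalk G p) : IsNBWalk G (p ∘ Fin.rev) :=
  ⟨fun i j hij => (h.1 j.rev i.rev (by simp [Fin.val_rev]; omega)).symm,
    fun i j hij => (h.2 j.rev i.rev (by simp [Fin.val_rev]; omega)).symm⟩

theorem isNBWalk_comp_rev_iff {p : Fin (k + 1) → V} : IsNBWalk G (p ∘ Fin.rev) ↔ IsNBWalk G p :=
  ⟨fun h => by simpa [Function.comp_def] using h.comp_rev, IsNBWalk.comp_rev⟩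

theorem isNBWalk_snoc_iff {r : Fin (k + 1) → V} {y : V} :
    IsNBWalk G (Fin.snoc r y : Fin (k + 2) → V) ↔
      G.Adj (r (Fin.last k)) y ∧ y ≠ r ⟨k - 1, Nat.sub_lt_succ k 1⟩ ∧ IsNBWalk G r := by
  have hrev : Fin.rev 1 = (⟨k - 1, Nat.sub_lt_succ k 1⟩ : Fin (k + 1)) := by
    rcases k with _ | k <;> ext <;> simp [Fin.val_rev]
  rw [← isNBWalk_comp_rev_iff, Fin.snoc_comp_rev, isNBWalk_cons_iff, isNBWalk_comp_rev_iff,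
    G.adj_comm]
  simp [hrev]

theorem IsNBWalk.tail {p : Fin (k + 2) → V} (h : IsNBWalk G p) : IsNBWalk G (Fin.tail p) := by
  rw [← Fin.cons_self_tail p, isNBWalk_cons_iff] at h
  exact h.2.2

theorem IsNBWalk.init {p : Fin (k + 2) → V} (h : IsNBWalk G p) : IsNBWalk G (Fin.init p) := by
  rw [← Fin.snoc_init_self p, isNBWalk_snoc_iff] at h
  exact h.2.2

end Walks

theorem Finset.sum_filter_of_equiv_prod {α β γ M : Type*} [Fintype α] [Fintype β] [Fintype γ]
    [AddCommMonoid M] (e : β × α ≃ γ) {p : γ → Prop} [DecidablePred p] {q : α → Prop}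
    [DecidablePred q] (s : α → Finset β) (h : ∀ b a, p (e (b, a)) ↔ q a ∧ b ∈ s a) (f : γ → M) :
    ∑ c ∈ univ.filter p, f c = ∑ a ∈ univ.filter q, ∑ b ∈ s a, f (e (b, a)) := by
  rw [sum_filter, ← e.sum_comp, Fintype.sum_prod_type, sum_comm, sum_filter]
  refine sum_congr rfl fun a _ => ?_
  rw [← sum_filter]
  split_ifs with ha
  · congr 1
    ext b
    simp [h, ha]
  · exact sum_eq_zero fun b hb => absurd ((h b a).1 (mem_filter.1 hb).2).1 ha

section Sums
variable [Fintype V] [DecidableEq V] (G : SimpleGraph V) [DecidableRel G.Adj] {k : ℕ}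

theorem sum_isNBWalk_eq_sum_cons {M : Type*} [AddCommMonoid M] (f : (Fin (k + 2) → V) → M) :
    ∑ p ∈ univ.filter (fun p => IsNBWalk G p), f p =
      ∑ r ∈ univ.filter (fun r => IsNBWalk G r),
        ∑ y ∈ G.neighborFinset (r 0) \ {r 1}, f (Fin.cons y r) :=
  sum_filter_of_equiv_prod (Fin.consEquiv fun _ => V) _
    (fun y r => by
      rw [show (Fin.consEquiv fun _ => V) (y, r) = Fin.cons y r from rfl, isNBWalk_cons_iff,
        mem_sdiff, SimpleGraph.mem_neighborFinset, G.adj_comm, mem_singleton]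
      tauto) f

theorem sum_isNBWalk_eq_sum_snoc {M : Type*} [AddCommMonoid M] (f : (Fin (k + 2) → V) → M) :
    ∑ p ∈ univ.filter (fun p => IsNBWalk G p), f p =
      ∑ r ∈ univ.filter (fun r => IsNBWalk G r),
        ∑ y ∈ G.neighborFinset (r (Fin.last k)) \ {r ⟨k - 1, Nat.sub_lt_succ k 1⟩},
          f (Fin.snoc r y) :=
  sum_filter_of_equiv_prod (Fin.snocEquiv fun _ => V) _
    (fun y r => by
      rw [show (Fin.snocEquiv fun _ => V) (y, r) = Fin.snoc r y from rfl, isNBWalk_snoc_iff,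
        mem_sdiff, SimpleGraph.mem_neighborFinset, mem_singleton]
      tauto) f

theorem sum_gradK_mul_eq_sum_mul_gradStarK (F : (Fin (k + 1) → V) → ℂ)
    (L : (Fin (k + 2) → V) → ℂ) :
    ∑ p ∈ univ.filter (fun p => IsNBWalk G p), gradK F p * L p =
      ∑ r ∈ univ.filter (fun r => IsNBWalk G r), F r * gradStarK G L r := by
  simp only [gradK, gradStarK, sub_mul, mul_sub, sum_sub_distrib, mul_sum]
  rw [sum_isNBWalk_eq_sum_cons G, sum_isNBWalk_eq_sum_snoc G]
  simp

theorem sum_gradStarK_eq_zero (L : (Fin (k + 2) → V) → ℂ) :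
    ∑ r ∈ univ.filter (fun r => IsNBWalk G r), gradStarK G L r = 0 := by
  simpa [gradK] using (sum_gradK_mul_eq_sum_mul_gradStarK G (fun _ => 1) L).symm

end Sums

theorem SimpleGraph.exists_adj_notMem_of_card_lt_degree (G : SimpleGraph V) [G.LocallyFinite]
    {v : V} {s : Finset V} (h : #s < G.degree v) : ∃ y, G.Adj v y ∧ y ∉ s := by
  obtain ⟨y, hy, hys⟩ :=
    exists_mem_notMem_of_card_lt_card (h.trans_eq (G.card_neighborFinset_eq_degree v).symm)
  exact ⟨y, (G.mem_neighborFinset v y).1 hy, hys⟩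

section Kernel
variable {G : SimpleGraph V} {k : ℕ} {K : (Fin (k + 1) → V) → ℂ}

theorem apply_tail_snoc_eq (hK : ∀ p : Fin (k + 2) → V, IsNBWalk G p → gradK K p = 0)
    {r : Fin (k + 1) → V} {y : V} (h : IsNBWalk G (Fin.snoc r y : Fin (k + 2) → V)) :
    K (Fin.tail (Fin.snoc r y : Fin (k + 2) → V)) = K r :=
  (sub_eq_zero.1 (hK _ h)).trans (congrArg K (Fin.init_snoc (α := fun _ => V) y r))

variable [G.LocallyFinite]

theorem exists_isNBWalk_last_eq (hdeg : ∀ v, 2 ≤ G.degree v) {v w : V} (hvw : G.Adj v w) :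
    ∃ r : Fin (k + 1) → V,
      IsNBWalk G r ∧ r (Fin.last k) = v ∧ w ≠ r ⟨k - 1, Nat.sub_lt_succ k 1⟩ := by
  induction k generalizing v w with
  | zero =>
    refine ⟨fun _ => v, ⟨fun i j _ => ?_, fun i j _ => ?_⟩, rfl, hvw.ne'⟩ <;>
      exact absurd j.isLt (by omega)
  | succ k ih =>
    obtain ⟨x, hvx, hxw⟩ := G.exists_adj_notMem_of_card_lt_degree (s := {w})
      ((card_singleton w).trans_lt (hdeg v))
    obtain ⟨r, hr, hlast, hne⟩ := ih hvx.symm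
    refine ⟨Fin.snoc r v, isNBWalk_snoc_iff.2 ⟨hlast ▸ hvx.symm, hne, hr⟩, by simp, ?_⟩
    show w ≠ (Fin.snoc r v : Fin (k + 2) → V) (Fin.last k).castSucc
    simpa [hlast, eq_comm] using hxw

theorem apply_eq_of_eq_from (hdeg : ∀ v, 3 ≤ G.degree v)
    (hK : ∀ p : Fin (k + 2) → V, IsNBWalk G p → gradK K p = 0) :
    ∀ d ≤ k, ∀ r s : Fin (k + 1) → V, IsNBWalk G r → IsNBWalk G s →
      (∀ i : Fin (k + 1), d ≤ i → r i = s i) → K r = K s := by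
  classical
  intro d
  induction d with
  | zero => exact fun _ r s _ _ hrs => congrArg K (funext fun i => hrs i i.zero_le)
  | succ d ih =>
    intro hd r s hr hs hrs
    have hlast : r (Fin.last k) = s (Fin.last k) := hrs _ (by simp; omega)
    obtain ⟨y, hy, hyrs⟩ := G.exists_adj_notMem_of_card_lt_degree
      (s := {r ⟨k - 1, Nat.sub_lt_succ k 1⟩, s ⟨k - 1, Nat.sub_lt_succ k 1⟩})
      (card_le_two.trans_lt (hdeg _))
    simp only [mem_insert, mem_singleton, not_or] at hyrs
    have hr' := isNBWalk_snoc_iff.2 ⟨hy, hyrs.1, hr⟩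
    have hs' := isNBWalk_snoc_iff.2 ⟨hlast ▸ hy, hyrs.2, hs⟩
    rw [← apply_tail_snoc_eq hK hr', ← apply_tail_snoc_eq hK hs']
    refine ih (by omega) _ _ hr'.tail hs'.tail fun i hi => ?_
    induction i using Fin.lastCases with
    | last => simp [Fin.tail]
    | cast j =>
      simp only [Fin.tail, Fin.succ_castSucc, Fin.snoc_castSucc]
      exact hrs _ (by simp at hi ⊢; omega)

theorem apply_eq_of_last_eq (hdeg : ∀ v, 3 ≤ G.degree v)
    (hK : ∀ p : Fin (k + 2) → V, IsNBWalk G p → gradK K p = 0) {r s : Fin (k + 1) → V}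
    (hr : IsNBWalk G r) (hs : IsNBWalk G s) (h : r (Fin.last k) = s (Fin.last k)) : K r = K s :=
  apply_eq_of_eq_from hdeg hK k le_rfl r s hr hs fun i hi => by
    obtain rfl : i = Fin.last k := Fin.ext (by have := i.isLt; simp; omega)
    exact h

theorem exists_apply_eq_of_adj (hdeg : ∀ v, 3 ≤ G.degree v)
    (hK : ∀ p : Fin (k + 2) → V, IsNBWalk G p → gradK K p = 0) {r : Fin (k + 1) → V}
    (hr : IsNBWalk G r) {w : V} (hw : G.Adj (r (Fin.last k)) w) :
    ∃ s, IsNBWalk G s ∧ s (Fin.last k) = w ∧ K s = K r := by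
  obtain ⟨r', hr', hlast, hne⟩ :=
    exists_isNBWalk_last_eq (k := k) (fun v => (by omega : 2 ≤ 3).trans (hdeg v)) hw
  have h := isNBWalk_snoc_iff.2 ⟨hlast ▸ hw, hne, hr'⟩
  refine ⟨_, h.tail, by simp [Fin.tail], ?_⟩
  rw [apply_tail_snoc_eq hK h]
  exact apply_eq_of_last_eq hdeg hK hr' hr hlast

theorem apply_eq_of_walk (hdeg : ∀ v, 3 ≤ G.degree v)
    (hK : ∀ p : Fin (k + 2) → V, IsNBWalk G p → gradK K p = 0) {u w : V} (p : G.Walk u w) :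
    ∀ r s : Fin (k + 1) → V, IsNBWalk G r → IsNBWalk G s →
      r (Fin.last k) = u → s (Fin.last k) = w → K r = K s := by
  induction p with
  | nil => exact fun r s hr hs hru hsu => apply_eq_of_last_eq hdeg hK hr hs (hru.trans hsu.symm)
  | cons huv _ ih =>
    intro r s hr hs hru hsw
    obtain ⟨r', hr', hlast, hK'⟩ := exists_apply_eq_of_adj hdeg hK hr (hru ▸ huv)
    exact hK' ▸ ih r' s hr' hs hlast hsw

theorem exists_const_of_gradK_eq_zero (hconn : G.Connected) (hdeg : ∀ v, 3 ≤ G.degree v)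
    (hK : ∀ p : Fin (k + 2) → V, IsNBWalk G p → gradK K p = 0) :
    ∃ c, ∀ r, IsNBWalk G r → K r = c := by
  obtain ⟨v⟩ := hconn.nonempty
  obtain ⟨w, hvw, -⟩ := G.exists_adj_notMem_of_card_lt_degree (v := v) (s := ∅)
    (by simpa using (hdeg v).trans_lt' (by omega))
  obtain ⟨r₀, hr₀, hlast, -⟩ :=
    exists_isNBWalk_last_eq (k := k) (fun v => (by omega : 2 ≤ 3).trans (hdeg v)) hvw
  exact ⟨K r₀, fun r hr => (hconn (r (Fin.last k)) v).elim fun p =>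
    apply_eq_of_walk hdeg hK p r r₀ hr hr₀ rfl hlast⟩

end Kernel

section Range
variable [Fintype V] [DecidableEq V] (G : SimpleGraph V) [DecidableRel G.Adj] (k : ℕ)

/- `∇` and `∇*` act on functions of all tuples and vanish off non-backtracking walks, so that
`ker gradNB` is exactly the hypothesis of `exists_const_of_gradK_eq_zero`. -/
noncomputable def gradNB :
    EuclideanSpace ℂ (Fin (k + 1) → V) →ₗ[ℂ] EuclideanSpace ℂ (Fin (k + 2) → V) where
  toFun F := WithLp.toLp 2 fun p => if IsNBWalk G p then gradK F p else 0
  map_add' F F' := by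
    ext p
    by_cases hp : IsNBWalk G p <;> simp [hp, gradK]
    ring
  map_smul' c F := by
    ext p
    by_cases hp : IsNBWalk G p <;> simp [hp, gradK, mul_sub]

noncomputable def gradStarNB :
    EuclideanSpace ℂ (Fin (k + 2) → V) →ₗ[ℂ] EuclideanSpace ℂ (Fin (k + 1) → V) where
  toFun L := WithLp.toLp 2 fun r => if IsNBWalk G r then gradStarK G L r else 0
  map_add' L L' := by
    ext r
    by_cases hr : IsNBWalk G r <;> simp [hr, gradStarK, sum_add_distrib]
    ring
  map_smul' c L := by
    ext r
    by_cases hr : IsNBWalk G r <;> simp [hr, gradStarK, mul_sub, mul_sum]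

theorem gradStarNB_eq_adjoint : gradStarNB G k = (gradNB G k).adjoint := by
  refine (LinearMap.eq_adjoint_iff _ _).2 fun L F => ?_
  simp only [PiLp.inner_apply, RCLike.inner_apply, gradStarNB, gradNB, LinearMap.coe_mk,
    AddHom.coe_mk, apply_ite (starRingEnd ℂ), map_zero, mul_ite, ite_mul, mul_zero, zero_mul,
    ← sum_filter]
  rw [sum_gradK_mul_eq_sum_mul_gradStarK]
  simp [gradStarK]

variable {G k}

theorem exists_gradStarK_eq_of_sum_eq_zero
    (hker : ∀ F : (Fin (k + 1) → V) → ℂ, (∀ p : Fin (k + 2) → V, IsNBWalk G p → gradK F p = 0) →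
      ∃ c, ∀ r, IsNBWalk G r → F r = c)
    {K : (Fin (k + 1) → V) → ℂ} (hK : ∑ r ∈ univ.filter (fun r => IsNBWalk G r), K r = 0) :
    ∃ L : (Fin (k + 2) → V) → ℂ, ∀ r, IsNBWalk G r → gradStarK G L r = K r := by
  set K' : EuclideanSpace ℂ (Fin (k + 1) → V) :=
    WithLp.toLp 2 fun r => if IsNBWalk G r then K r else 0
  have hK' : K' ∈ (LinearMap.ker (gradNB G k))ᗮ := by
    refine (Submodule.mem_orthogonal _ _).2 fun F hF => ?_
    obtain ⟨c, hc⟩ := hker F fun p hp => by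
      simpa [hp, gradNB] using congr($(LinearMap.mem_ker.1 hF) p)
    simp only [PiLp.inner_apply, RCLike.inner_apply, K', ite_mul, zero_mul, ← sum_filter]
    rw [sum_congr rfl fun r hr => by rw [hc r (mem_filter.1 hr).2], ← sum_mul, hK, zero_mul]
  rw [LinearMap.orthogonal_ker, ← gradStarNB_eq_adjoint] at hK'
  obtain ⟨L, hL⟩ := hK'
  exact ⟨L, fun r hr => by simpa [hr, gradStarNB, K'] using congr($hL r)⟩

end Range

/-- On a finite connected (q+1)-regular graph with q ≥ 2, the kernel of ∇ consists
exactly of the constants, and the range of ∇* consists exactly of the mean-zero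
functions on non-backtracking paths. -/
theorem grad_kernel_and_gradStar_range [Fintype V] [DecidableEq V] (G : SimpleGraph V)
    [DecidableRel G.Adj]
    (q : ℕ) (hq : 2 ≤ q) (hconn : G.Connected)
    (hreg : G.IsRegularOfDegree (q + 1)) (j : ℕ) :
    (∀ K' : (Fin (j + 1) → V) → ℂ,
      (∀ p : Fin (j + 2) → V, IsNBWalk G p → gradK K' p = 0) ↔
      (∃ c : ℂ, ∀ r : Fin (j + 1) → V, IsNBWalk G r → K' r = c)) ∧
    (∀ K : (Fin (j + 1) → V) → ℂ,
      (∃ L : (Fin (j + 2) → V) → ℂ,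
        ∀ r : Fin (j + 1) → V, IsNBWalk G r → gradStarK G L r = K r) ↔
      ∑ r ∈ univ.filter (fun r : Fin (j + 1) → V => IsNBWalk G r), K r = 0) := by
  have hdeg : ∀ v, 3 ≤ G.degree v := fun v => by rw [hreg v]; omega
  have hker : ∀ K' : (Fin (j + 1) → V) → ℂ,
      (∀ p : Fin (j + 2) → V, IsNBWalk G p → gradK K' p = 0) →
        ∃ c, ∀ r, IsNBWalk G r → K' r = c :=
    fun K' => exists_const_of_gradK_eq_zero hconn hdeg
  refine ⟨fun K' => ⟨hker K', ?_⟩, fun K => ⟨?_, exists_gradStarK_eq_of_sum_eq_zero hker⟩⟩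
  · rintro ⟨c, hc⟩ p hp
    show K' (Fin.tail p) - K' (Fin.init p) = 0
    rw [hc _ hp.tail, hc _ hp.init, sub_self]
  · rintro ⟨L, hL⟩
    rw [← sum_gradStarK_eq_zero G L]
    exact sum_congr rfl fun r hr => (hL r (mem_filter.1 hr).2).symm
end

section
/- Let T be a locally finite tree with maximal degree at most D and minimal degree at least d ≥ 2. Let P be the random-walk operator (Pf)(x) = (1/d(x)) Σ_{y∼x} f(y), self-adjoint on ℓ²(T, d) (where vertex x has weight d(x)). Then the spectral radius of P satisfies ρ_P ≤ 2√(D−1)/d. -/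
/-!
Schur test with the weight `w x = β⁻¹ ^ dist r x`, `β = √(D - 1)`, for a root `r`. In a tree
every vertex has at most one neighbour closer to `r` (weight `β w x`), all others are farther
(weight `w x / β`), so `∑_{y ∼ x} w y ≤ (β + (deg x - 1) / β) w x ≤ (2β / d) deg x · w x`.
Weighted Cauchy–Schwarz on each `P f x`, followed by swapping the double sum over edges, turns
this into `‖P f‖² ≤ (2β / d)² ‖f‖²` in `ℓ²(V, deg)`.
-/

open Finset

variable {V : Type*}

namespace SimpleGraph

variable (G : SimpleGraph V) [∀ v : V, Fintype (G.neighborSet v)]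

noncomputable def randomWalk {𝕜 : Type*} [RCLike 𝕜] (f : V → 𝕜) (x : V) : 𝕜 :=
  (G.degree x : 𝕜)⁻¹ * ∑ y ∈ G.neighborFinset x, f y

noncomputable def degreeNormSq {𝕜 : Type*} [RCLike 𝕜] (f : V → 𝕜) : ℝ :=
  ∑' x, (G.degree x : ℝ) * ‖f x‖ ^ 2

end SimpleGraph

theorem add_sub_one_mul_inv_le {β d k : ℝ} (hβ : 0 < β) (hd : 1 ≤ d) (hdk : d ≤ k)
    (hk : k ≤ β ^ 2 + 1) : β + (k - 1) * β⁻¹ ≤ 2 * β / d * k := by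
  have key : d * (β ^ 2 + k - 1) ≤ 2 * β ^ 2 * k := by
    nlinarith [mul_nonneg (sub_nonneg.2 hdk) (by linarith [sq_nonneg β] : 0 ≤ β ^ 2 + k - 1),
      mul_nonneg (by linarith : 0 ≤ k) (sub_nonneg.2 hk)]
  rw [div_mul_eq_mul_div, le_div_iff₀ (by linarith)]
  calc (β + (k - 1) * β⁻¹) * d = d * (β ^ 2 + k - 1) / β := by field_simp; ring
    _ ≤ 2 * β ^ 2 * k / β := by gcongr
    _ = 2 * β * k := by field_simp

theorem Finset.norm_sum_sq_le_sum_mul_sum_norm_sq_div {ι E : Type*} [SeminormedAddCommGroup E]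
    (s : Finset ι) (a : ι → E) {w : ι → ℝ} (hw : ∀ i ∈ s, 0 < w i) :
    ‖∑ i ∈ s, a i‖ ^ 2 ≤ (∑ i ∈ s, w i) * ∑ i ∈ s, ‖a i‖ ^ 2 / w i := by
  calc ‖∑ i ∈ s, a i‖ ^ 2 ≤ (∑ i ∈ s, ‖a i‖) ^ 2 := by gcongr; exact norm_sum_le _ _
    _ ≤ _ := sum_sq_le_sum_mul_sum_of_sq_le_mul s (fun i hi => (hw i hi).le)
        (fun i hi => div_nonneg (sq_nonneg _) (hw i hi).le)
        (fun i hi => (mul_div_cancel₀ _ (hw i hi).ne').ge)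

namespace SimpleGraph

variable {G : SimpleGraph V}

theorem IsTree.eq_of_adj_of_dist_lt (hG : G.IsTree) (r : V) {x y₁ y₂ : V}
    (h₁ : G.Adj x y₁) (h₂ : G.Adj x y₂) (hd₁ : G.dist r y₁ < G.dist r x)
    (hd₂ : G.dist r y₂ < G.dist r x) : y₁ = y₂ := by
  classical
  obtain ⟨q, hq, -⟩ := hG.connected.exists_path_of_dist r x
  suffices ∀ y, G.Adj x y → G.dist r y < G.dist r x → y = q.penultimate from
    (this y₁ h₁ hd₁).trans (this y₂ h₂ hd₂).symm
  intro y hxy hy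
  obtain ⟨p, hp, hpl⟩ := hG.connected.exists_path_of_dist r y
  have hx : x ∉ p.support := fun hx => by
    have := p.length_takeUntil_le_length hx
    have := dist_le (p.takeUntil x hx)
    omega
  refine hG.isAcyclic.eq_penultimate_of_adj_end hq hxy (by_contra fun hyq => hx ?_)
  exact hG.isAcyclic.mem_support_of_ne_mem_support_of_adj_of_isPath hp hq hxy.symm hyq

theorem IsTree.sum_neighborFinset_inv_pow_dist_le [∀ v, Fintype (G.neighborSet v)]
    (hG : G.IsTree) (r x : V) {β : ℝ} (hβ : 1 ≤ β) :
    ∑ y ∈ G.neighborFinset x, β⁻¹ ^ G.dist r y ≤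
      (β + (G.degree x - 1) * β⁻¹) * β⁻¹ ^ G.dist r x := by
  classical
  have hβ₀ : β ≠ 0 := by positivity
  set s := (G.neighborFinset x).filter fun y => G.dist r y < G.dist r x
  set t := (G.neighborFinset x).filter fun y => ¬G.dist r y < G.dist r x
  have hs : #s ≤ 1 := card_le_one.2 fun a ha b hb => by
    simp only [s, mem_filter, mem_neighborFinset] at ha hb
    exact hG.eq_of_adj_of_dist_lt r ha.1 hb.1 ha.2 hb.2
  have hst : (#s : ℝ) + #t = G.degree x := by
    rw [← card_neighborFinset_eq_degree]
    exact_mod_cast card_filter_add_card_filter_not _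
  have hsum_s : ∑ y ∈ s, β⁻¹ ^ G.dist r y = #s * (β * β⁻¹ ^ G.dist r x) := by
    rw [← nsmul_eq_mul, ← sum_const]
    refine sum_congr rfl fun y hy => ?_
    simp only [s, mem_filter, mem_neighborFinset] at hy
    have : G.dist r x = G.dist r y + 1 := by
      have := hG.dist_eq_dist_add_one_of_adj r hy.1
      omega
    rw [this, pow_succ, mul_left_comm, mul_inv_cancel₀ hβ₀, mul_one]
  have hsum_t : ∑ y ∈ t, β⁻¹ ^ G.dist r y = #t * (β⁻¹ * β⁻¹ ^ G.dist r x) := by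
    rw [← nsmul_eq_mul, ← sum_const]
    refine sum_congr rfl fun y hy => ?_
    simp only [t, mem_filter, mem_neighborFinset] at hy
    have : G.dist r y = G.dist r x + 1 := by
      have := hG.dist_eq_dist_add_one_of_adj r hy.1
      omega
    rw [this, pow_succ']
  rw [← sum_filter_add_sum_filter_not _ fun y => G.dist r y < G.dist r x, hsum_s, hsum_t, ← hst]
  have hs' : (#s : ℝ) ≤ 1 := by exact_mod_cast hs
  have hβ' : β⁻¹ ≤ β := (inv_le_one_of_one_le₀ hβ).trans hβ
  have hgap : 0 ≤ (1 - #s) * (β - β⁻¹) * β⁻¹ ^ G.dist r x :=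
    mul_nonneg (mul_nonneg (sub_nonneg.2 hs') (sub_nonneg.2 hβ')) (by positivity)
  linarith

variable [∀ v : V, Fintype (G.neighborSet v)]

theorem sum_sum_neighborFinset_le {s t : Finset V} {h : V → V → ℝ}
    (h_nonneg : ∀ x y, 0 ≤ h x y) (h_support : ∀ x y, y ∉ t → h x y = 0) :
    ∑ x ∈ s, ∑ y ∈ G.neighborFinset x, h x y ≤ ∑ y ∈ t, ∑ x ∈ G.neighborFinset y, h x y := by
  classical
  calc ∑ x ∈ s, ∑ y ∈ G.neighborFinset x, h x y
      = ∑ x ∈ s, ∑ y ∈ (G.neighborFinset x).filter (· ∈ t), h x y := by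
        refine sum_congr rfl fun x _ => (sum_filter_of_ne fun y _ hy => ?_).symm
        exact not_imp_comm.1 (h_support x y) hy
    _ = ∑ y ∈ t, ∑ x ∈ (G.neighborFinset y).filter (· ∈ s), h x y :=
        sum_comm' fun x y => by simp only [mem_filter, mem_neighborFinset, adj_comm]; tauto
    _ ≤ ∑ y ∈ t, ∑ x ∈ G.neighborFinset y, h x y :=
        sum_le_sum fun y _ => sum_le_sum_of_subset_of_nonneg (filter_subset _ _)
          fun x _ _ => h_nonneg x y

section SchurTest

variable {𝕜 : Type*} [RCLike 𝕜] {w : V → ℝ} {C : ℝ}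

theorem degree_mul_norm_randomWalk_sq_le (hw : ∀ v, 0 < w v) (hC : 0 ≤ C)
    (hwC : ∀ x, ∑ y ∈ G.neighborFinset x, w y ≤ C * G.degree x * w x) (f : V → 𝕜) (x : V) :
    G.degree x * ‖G.randomWalk f x‖ ^ 2 ≤
      C * ∑ y ∈ G.neighborFinset x, w x * (‖f y‖ ^ 2 / w y) := by
  have hdeg : (G.degree x : ℝ) * ‖G.randomWalk f x‖ ^ 2 =
      ‖∑ y ∈ G.neighborFinset x, f y‖ ^ 2 / G.degree x := by
    rw [randomWalk, norm_mul, norm_inv, RCLike.norm_natCast]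
    grind
  have hmean : (∑ y ∈ G.neighborFinset x, w y) / G.degree x ≤ C * w x :=
    div_le_of_le_mul₀ (Nat.cast_nonneg _) (mul_nonneg hC (hw x).le) (by linarith [hwC x])
  rw [hdeg, ← mul_sum, ← mul_assoc]
  calc ‖∑ y ∈ G.neighborFinset x, f y‖ ^ 2 / G.degree x
      ≤ (∑ y ∈ G.neighborFinset x, w y) * (∑ y ∈ G.neighborFinset x, ‖f y‖ ^ 2 / w y)
        / G.degree x := by
        gcongr
        exact norm_sum_sq_le_sum_mul_sum_norm_sq_div _ _ fun y _ => hw y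
    _ = (∑ y ∈ G.neighborFinset x, w y) / G.degree x *
          ∑ y ∈ G.neighborFinset x, ‖f y‖ ^ 2 / w y := div_mul_eq_mul_div _ _ _ |>.symm
    _ ≤ C * w x * ∑ y ∈ G.neighborFinset x, ‖f y‖ ^ 2 / w y :=
        mul_le_mul_of_nonneg_right hmean
          (sum_nonneg fun y _ => div_nonneg (sq_nonneg _) (hw y).le)

theorem degreeNormSq_randomWalk_le (hw : ∀ v, 0 < w v) (hC : 0 ≤ C)
    (hwC : ∀ x, ∑ y ∈ G.neighborFinset x, w y ≤ C * G.degree x * w x) (f : V → 𝕜)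
    (hf : (Function.support f).Finite) :
    G.degreeNormSq (G.randomWalk f) ≤ C ^ 2 * G.degreeNormSq f := by
  classical
  set A := hf.toFinset
  have hfA : ∀ y ∉ A, f y = 0 := fun y hy => by simpa [A] using hy
  set S := A.biUnion fun y => G.neighborFinset y
  have hPA : ∀ x ∉ S, G.randomWalk f x = 0 := fun x hx => by
    refine mul_eq_zero_of_right _ (sum_eq_zero fun y hy => hfA y fun hyA => hx ?_)
    exact mem_biUnion.2 ⟨y, hyA, by simpa [adj_comm] using hy⟩
  rw [degreeNormSq, degreeNormSq, tsum_eq_sum (s := S) fun x hx => by simp [hPA x hx],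
    tsum_eq_sum (s := A) fun x hx => by simp [hfA x hx]]
  calc ∑ x ∈ S, (G.degree x : ℝ) * ‖G.randomWalk f x‖ ^ 2
      ≤ ∑ x ∈ S, C * ∑ y ∈ G.neighborFinset x, w x * (‖f y‖ ^ 2 / w y) :=
        sum_le_sum fun x _ => degree_mul_norm_randomWalk_sq_le hw hC hwC f x
    _ = C * ∑ x ∈ S, ∑ y ∈ G.neighborFinset x, w x * (‖f y‖ ^ 2 / w y) := (mul_sum ..).symm
    _ ≤ C * ∑ y ∈ A, ∑ x ∈ G.neighborFinset y, w x * (‖f y‖ ^ 2 / w y) := by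
        gcongr
        refine sum_sum_neighborFinset_le (fun x y => ?_) fun x y hy => by simp [hfA y hy]
        exact mul_nonneg (hw x).le (div_nonneg (sq_nonneg _) (hw y).le)
    _ ≤ C * ∑ y ∈ A, C * G.degree y * w y * (‖f y‖ ^ 2 / w y) := by
        simp_rw [← sum_mul]
        gcongr with y
        · exact div_nonneg (sq_nonneg _) (hw y).le
        · exact hwC y
    _ = C ^ 2 * ∑ y ∈ A, (G.degree y : ℝ) * ‖f y‖ ^ 2 := by
        simp_rw [mul_sum]
        refine sum_congr rfl fun y _ => ?_
        field_simp [(hw y).ne']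

end SchurTest

end SimpleGraph

/-- Norm bound for the random walk operator P on ℓ²(T,deg) for a locally finite tree T of
maximal degree ≤ D and minimal degree ≥ d ≥ 2: ‖Pf‖ ≤ (2√(D−1)/d)‖f‖ on finitely
supported functions. -/
theorem random_walk_spectral_radius [DecidableEq V] (G : SimpleGraph V)
    [∀ v : V, Fintype (G.neighborSet v)]
    (htree : G.IsTree) (D d : ℕ) (hd : 2 ≤ d)
    (hmin : ∀ v : V, d ≤ G.degree v) (hmax : ∀ v : V, G.degree v ≤ D)
    (f : V → ℂ) (hf : (Function.support f).Finite) :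
    ∑' x : V, (G.degree x : ℝ) *
        ‖((G.degree x : ℂ))⁻¹ * ∑ y ∈ G.neighborFinset x, f y‖ ^ 2
      ≤ (2 * Real.sqrt ((D : ℝ) - 1) / (d : ℝ)) ^ 2 *
        ∑' x : V, (G.degree x : ℝ) * ‖f x‖ ^ 2 := by
  obtain ⟨r⟩ := htree.connected.nonempty
  set β := √((D : ℝ) - 1)
  have hD : (2 : ℝ) ≤ D := by exact_mod_cast hd.trans ((hmin r).trans (hmax r))
  have hβ : 1 ≤ β := Real.one_le_sqrt.2 (by linarith)
  have hβsq : β ^ 2 = D - 1 := Real.sq_sqrt (by linarith)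
  refine G.degreeNormSq_randomWalk_le (w := fun x => β⁻¹ ^ G.dist r x) (fun x => by positivity)
    (by positivity) (fun x => ?_) f hf
  have hdeg_min : (d : ℝ) ≤ G.degree x := by exact_mod_cast hmin x
  have hdeg_max : (G.degree x : ℝ) ≤ D := by exact_mod_cast hmax x
  calc _ ≤ _ := htree.sum_neighborFinset_inv_pow_dist_le r x hβ
    _ ≤ _ := by
      gcongr
      exact add_sub_one_mul_inv_le (by positivity) (by exact_mod_cast one_le_two.trans hd)
        hdeg_min (by linarith)
end
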